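/- arXiv:1708.06536 — 5 statements merged into one kernel-verified Lean document; each statement's English description precedes it below -/
import Mathlib

section
/- Let g be a Lie superalgebra over ℂ with an even, supersymmetric, invariant bilinear form (·,·), graded by eigenvalues of ad h for an sl2-triple (e,h,f) with (e,f)=1, such that g(2)=ℂe and g(−2)=ℂf. Then for every x ∈ g(0), one has [e,x]=0 if and only if (h,x)=0. -/
/-!
Since `ad h` acts on `[e, x]` with eigenvalue `2`, one has `[e, x] = c e` for some `c`, while
invariance gives `(h, x) = ([e, f], x) = -(f, [e, x]) = -c (f, e) = -c`.
Both sides of the equivalence therefore say `c = 0`.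
-/

section EvenElements

variable {L : Type*} [AddCommGroup L] [Module ℂ L] {br : L →ₗ[ℂ] L →ₗ[ℂ] L}
  {Lp : ZMod 2 → Submodule ℂ L}

lemma bracket_anticomm_of_mem_even
    (hskew : ∀ (i j : ZMod 2), ∀ x ∈ Lp i, ∀ y ∈ Lp j,
      br x y = -(((-1 : ℂ) ^ (i * j).val) • br y x))
    {j : ZMod 2} {x y : L} (hx : x ∈ Lp 0) (hy : y ∈ Lp j) :
    br x y = -br y x := by
  simpa using hskew 0 j x hx y hy

lemma bracket_eigenvalue_add
    (hJac : ∀ (i j : ZMod 2), ∀ x ∈ Lp i, ∀ y ∈ Lp j, ∀ w : L,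
      br (br x y) w = br x (br y w) - ((-1 : ℂ) ^ (i * j).val) • br y (br x w))
    {j : ZMod 2} {h y x : L} {a b : ℂ} (hh : h ∈ Lp 0) (hy : y ∈ Lp j)
    (hhy : br h y = a • y) (hhx : br h x = b • x) :
    br h (br y x) = (a + b) • br y x := by
  have hJ : br (br h y) x = br h (br y x) - br y (br h x) := by
    simpa using hJac 0 j h hh y hy x
  rw [hhy, hhx] at hJ
  simp only [map_smul, LinearMap.smul_apply] at hJ
  rw [add_smul, hJ, sub_add_cancel]

lemma form_symm_of_mem_even {B : L →ₗ[ℂ] L →ₗ[ℂ] ℂ}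
    (hBsuper : ∀ (i j : ZMod 2), ∀ x ∈ Lp i, ∀ y ∈ Lp j,
      B x y = ((-1 : ℂ) ^ (i * j).val) * B y x)
    {j : ZMod 2} {x y : L} (hx : x ∈ Lp 0) (hy : y ∈ Lp j) :
    B x y = B y x := by
  simpa using hBsuper 0 j x hx y hy

end EvenElements

theorem stmt2_general
    {L : Type*} [AddCommGroup L] [Module ℂ L]
    (br : L →ₗ[ℂ] L →ₗ[ℂ] L)
    (Lp : ZMod 2 → Submodule ℂ L)
    (hskew : ∀ (i j : ZMod 2), ∀ x ∈ Lp i, ∀ y ∈ Lp j,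
      br x y = -(((-1 : ℂ) ^ (i * j).val) • br y x))
    (hJac : ∀ (i j : ZMod 2), ∀ x ∈ Lp i, ∀ y ∈ Lp j, ∀ w : L,
      br (br x y) w = br x (br y w) - ((-1 : ℂ) ^ (i * j).val) • br y (br x w))
    (B : L →ₗ[ℂ] L →ₗ[ℂ] ℂ)
    (hBsuper : ∀ (i j : ZMod 2), ∀ x ∈ Lp i, ∀ y ∈ Lp j,
      B x y = ((-1 : ℂ) ^ (i * j).val) * B y x)
    (hBinv : ∀ a b c : L, B (br a b) c = B a (br b c))
    (e h f : L) (hep : e ∈ Lp 0) (hhp : h ∈ Lp 0) (hfp : f ∈ Lp 0)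
    (hef : br e f = h) (hhe : br h e = (2 : ℂ) • e)
    (hBef : B e f = 1)
    (hg2span : ∀ x : L, br h x = (2 : ℂ) • x → x ∈ Submodule.span ℂ ({e} : Set L))
    :
    ∀ x : L, br h x = 0 → (br e x = 0 ↔ B h x = 0) := by
  intro x hx
  have he : e ≠ 0 := by
    rintro rfl
    simp at hBef
  have hhex : br h (br e x) = (2 : ℂ) • br e x := by
    simpa using bracket_eigenvalue_add hJac hhp hep hhe (hx.trans (zero_smul ℂ x).symm)
  obtain ⟨c, hc⟩ := Submodule.mem_span_singleton.mp (hg2span _ hhex)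
  have hBhx : B h x = -c :=
    calc B h x = -B f (br e x) := by
          rw [← hBinv, bracket_anticomm_of_mem_even hskew hfp hep, hef]
          simp
      _ = -c := by
          rw [← hc, map_smul, ← form_symm_of_mem_even hBsuper hep hfp, hBef, smul_eq_mul,
            mul_one]
  rw [hBhx, ← hc, smul_eq_zero_iff_left he, neg_eq_zero]

theorem stmt2
    {L : Type*} [AddCommGroup L] [Module ℂ L]
    (br : L →ₗ[ℂ] L →ₗ[ℂ] L)
    (Lp : ZMod 2 → Submodule ℂ L)
    (hcompl : IsCompl (Lp 0) (Lp 1))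
    (hbrp : ∀ (i j : ZMod 2), ∀ x ∈ Lp i, ∀ y ∈ Lp j, br x y ∈ Lp (i + j))
    (hskew : ∀ (i j : ZMod 2), ∀ x ∈ Lp i, ∀ y ∈ Lp j,
      br x y = -(((-1 : ℂ) ^ (i * j).val) • br y x))
    (hJac : ∀ (i j : ZMod 2), ∀ x ∈ Lp i, ∀ y ∈ Lp j, ∀ w : L,
      br (br x y) w = br x (br y w) - ((-1 : ℂ) ^ (i * j).val) • br y (br x w))
    (B : L →ₗ[ℂ] L →ₗ[ℂ] ℂ)
    (hBeven : ∀ x ∈ Lp 0, ∀ y ∈ Lp 1, B x y = 0 ∧ B y x = 0)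
    (hBsuper : ∀ (i j : ZMod 2), ∀ x ∈ Lp i, ∀ y ∈ Lp j,
      B x y = ((-1 : ℂ) ^ (i * j).val) * B y x)
    (hBinv : ∀ a b c : L, B (br a b) c = B a (br b c))
    (e h f : L) (hep : e ∈ Lp 0) (hhp : h ∈ Lp 0) (hfp : f ∈ Lp 0)
    (hef : br e f = h) (hhe : br h e = (2 : ℂ) • e) (hhf : br h f = (-2 : ℂ) • f)
    (hBef : B e f = 1)
    (hg2span : ∀ x : L, br h x = (2 : ℂ) • x → x ∈ Submodule.span ℂ ({e} : Set L))
    (hgm2span : ∀ x : L, br h x = (-2 : ℂ) • x → x ∈ Submodule.span ℂ ({f} : Set L))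
    :
    ∀ x : L, br h x = 0 → (br e x = 0 ↔ B h x = 0) :=
  stmt2_general br Lp hskew hJac B hBsuper hBinv e h f hep hhp hfp hef hhe hBef hg2span
end

section
/- Let g be a Lie superalgebra over ℂ with sl2-triple (e,h,f), minimal grading by ad h (g(i)=0 for |i|>2, g(±2) one-dimensional spanned by e, f), and dual homogeneous bases {z_α}, {z_α*} of g(−1) with respect to ⟨x,y⟩=(e,[x,y]). Then Σ_{α∈S(−1)} [z_α, [e, z_α*]] = ((r−s)/2)·h, where s = dim g(−1)_0̄ and r = dim g(−1)_1̄. -/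
/-!
By super Jacobi with the even element `e`,
`[z_α, [e, z_α*]] = [[z_α, e], z_α*] + [e, [z_α, z_α*]]`, and since `[z_α, z_α*]` lies in `ℂ f`
with `(e, [z_α, z_α*]) = -(-1)^{|α|}`, the second term is `-(-1)^{|α|} h`; summed over `α` it
gives `(r - s) h`. The duality `z_α* = z_β`, `z_β* = -(-1)^{|α|} z_α` turns the `β`-term of
`Σ [[z_α, e], z_α*]` into minus the `α`-term of the original sum, so that sum is `-Σ [z_α, [e, z_α*]]`
and the original sum is half of `(r - s) h`.
-/

lemma ZMod.two_mul_self (a : ZMod 2) : a * a = a := by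
  fin_cases a <;> rfl

lemma neg_one_pow_zmod_two_mul_self {R : Type*} [Monoid R] [HasDistribNeg R] (a : ZMod 2) :
    (-1 : R) ^ a.val * (-1 : R) ^ a.val = 1 := by
  rw [← pow_add]
  exact Even.neg_one_pow ⟨a.val, rfl⟩

lemma sum_neg_neg_one_pow_zmod_two {R : Type*} [Ring R] {ι : Type*} [Fintype ι] (p : ι → ZMod 2) :
    ∑ i, -((-1 : R) ^ (p i).val) =
      ((Finset.univ.filter fun i => p i = 1).card : R) -
        ((Finset.univ.filter fun i => p i = 0).card : R) := by
  have hsign : ∀ i, -((-1 : R) ^ (p i).val) = if p i = 1 then 1 else -1 := by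
    intro i
    rcases (by decide : ∀ a : ZMod 2, a = 0 ∨ a = 1) (p i) with h | h <;> simp [h, ZMod.val_one]
  have hne : ∀ i, ¬p i = 1 ↔ p i = 0 := fun i => (by decide : ∀ a : ZMod 2, ¬a = 1 ↔ a = 0) (p i)
  simp only [hsign, Finset.sum_ite, Finset.sum_const, nsmul_eq_mul, mul_one, mul_neg, hne,
    sub_eq_add_neg]

lemma eq_smul_of_mem_span_singleton {K V : Type*} [Semiring K] [AddCommMonoid V] [Module K V]
    (φ : V →ₗ[K] K) {f u : V} (hφf : φ f = 1) (hu : u ∈ Submodule.span K {f}) :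
    u = φ u • f := by
  obtain ⟨c, rfl⟩ := Submodule.mem_span_singleton.mp hu
  simp [hφf]

lemma eq_div_two_smul_of_eq_neg_add {K V : Type*} [Field K] [CharZero K] [AddCommGroup V]
    [Module K V] {a v : V} {c : K} (ha : a = -a + c • v) : a = (c / 2) • v := by
  have h2 : (2 : K) • a = c • v := by
    rw [two_smul]
    nth_rewrite 1 [ha]
    abel
  rw [div_eq_inv_mul, mul_smul, ← h2, smul_smul, inv_mul_cancel₀ two_ne_zero, one_smul]

section SuperBracket

variable {L : Type*} [AddCommGroup L] [Module ℂ L]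
  {br : L →ₗ[ℂ] L →ₗ[ℂ] L} {Lp : ZMod 2 → Submodule ℂ L}

lemma br_swap_of_mem_zero
    (hskew : ∀ (i j : ZMod 2), ∀ x ∈ Lp i, ∀ y ∈ Lp j,
      br x y = -(((-1 : ℂ) ^ (i * j).val) • br y x))
    {a : ZMod 2} {x e : L} (hx : x ∈ Lp a) (he : e ∈ Lp 0) :
    br x e = -br e x := by
  simpa using hskew a 0 x hx e he

lemma br_swap_of_mem_same
    (hskew : ∀ (i j : ZMod 2), ∀ x ∈ Lp i, ∀ y ∈ Lp j,
      br x y = -(((-1 : ℂ) ^ (i * j).val) • br y x))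
    {a : ZMod 2} {x y : L} (hx : x ∈ Lp a) (hy : y ∈ Lp a) :
    br x y = -(((-1 : ℂ) ^ a.val) • br y x) := by
  simpa [ZMod.two_mul_self] using hskew a a x hx y hy

lemma br_br_of_mem_zero
    (hJac : ∀ (i j : ZMod 2), ∀ x ∈ Lp i, ∀ y ∈ Lp j, ∀ w : L,
      br (br x y) w = br x (br y w) - ((-1 : ℂ) ^ (i * j).val) • br y (br x w))
    {a : ZMod 2} {x e : L} (hx : x ∈ Lp a) (he : e ∈ Lp 0) (w : L) :
    br x (br e w) = br (br x e) w + br e (br x w) := by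
  rw [hJac a 0 x hx e he w]
  simp

lemma br_eq_neg_sign_smul_of_pairing
    (hskew : ∀ (i j : ZMod 2), ∀ x ∈ Lp i, ∀ y ∈ Lp j,
      br x y = -(((-1 : ℂ) ^ (i * j).val) • br y x))
    {B : L →ₗ[ℂ] L →ₗ[ℂ] ℂ} {e f x y : L} {a : ZMod 2} (hx : x ∈ Lp a) (hy : y ∈ Lp a)
    (hBef : B e f = 1) (hspan : br x y ∈ Submodule.span ℂ {f}) (hpair : B e (br y x) = 1) :
    br x y = -((-1 : ℂ) ^ a.val) • f := by
  rw [eq_smul_of_mem_span_singleton (B e) hBef hspan, br_swap_of_mem_same hskew hx hy]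
  simp [hpair]

lemma br_br_neg_sign_smul
    (hbrp : ∀ (i j : ZMod 2), ∀ x ∈ Lp i, ∀ y ∈ Lp j, br x y ∈ Lp (i + j))
    (hskew : ∀ (i j : ZMod 2), ∀ x ∈ Lp i, ∀ y ∈ Lp j,
      br x y = -(((-1 : ℂ) ^ (i * j).val) • br y x))
    {a : ZMod 2} {e x y : L} (he : e ∈ Lp 0) (hx : x ∈ Lp a) (hy : y ∈ Lp a) :
    br (br y e) (-(((-1 : ℂ) ^ a.val) • x)) = -br x (br e y) := by
  have hey : br e y ∈ Lp a := by simpa using hbrp 0 a e he y hy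
  rw [br_swap_of_mem_zero hskew hy he]
  simp only [map_neg, LinearMap.neg_apply, map_smul, neg_neg,
    br_swap_of_mem_same hskew hey hx, smul_smul,
    neg_one_pow_zmod_two_mul_self, one_smul]

end SuperBracket

theorem stmt9_general
    {L : Type*} [AddCommGroup L] [Module ℂ L]
    (br : L →ₗ[ℂ] L →ₗ[ℂ] L)
    (Lp : ZMod 2 → Submodule ℂ L)
    (hbrp : ∀ (i j : ZMod 2), ∀ x ∈ Lp i, ∀ y ∈ Lp j, br x y ∈ Lp (i + j))
    (hskew : ∀ (i j : ZMod 2), ∀ x ∈ Lp i, ∀ y ∈ Lp j,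
      br x y = -(((-1 : ℂ) ^ (i * j).val) • br y x))
    (hJac : ∀ (i j : ZMod 2), ∀ x ∈ Lp i, ∀ y ∈ Lp j, ∀ w : L,
      br (br x y) w = br x (br y w) - ((-1 : ℂ) ^ (i * j).val) • br y (br x w))
    (B : L →ₗ[ℂ] L →ₗ[ℂ] ℂ)
    (e h f : L) (hep : e ∈ Lp 0)
    (hef : br e f = h)
    (hBef : B e f = 1)
    {ι : Type*} [Fintype ι] [DecidableEq ι]
    (p : ι → ZMod 2) (z zstar : ι → L)
    (hz : ∀ i, z i ∈ Lp (p i)) (hzs : ∀ i, zstar i ∈ Lp (p i))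
    (hzdeg : ∀ i, br h (z i) = (-1 : ℂ) • z i)
    (hzsdeg : ∀ i, br h (zstar i) = (-1 : ℂ) • zstar i)
    (hdual : ∀ i j, B e (br (zstar i) (z j)) = if i = j then (1 : ℂ) else 0)
    (hm2span : ∀ x y : L, br h x = (-1 : ℂ) • x → br h y = (-1 : ℂ) • y →
      br x y ∈ Submodule.span ℂ ({f} : Set L))
    (τ : ι → ι) (hτinv : ∀ i, τ (τ i) = i)
    (hτ1 : ∀ i, zstar i = z (τ i))
    (hτ2 : ∀ i, zstar (τ i) = -(((-1 : ℂ) ^ (p i).val) • z i))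
    :
    ∑ i, br (z i) (br e (zstar i)) =
      ((((Finset.univ.filter fun i => p i = 1).card : ℂ) -
        ((Finset.univ.filter fun i => p i = 0).card : ℂ)) / 2) • h := by
  have hdiag : ∀ i, br (z i) (zstar i) = -((-1 : ℂ) ^ (p i).val) • f := fun i =>
    br_eq_neg_sign_smul_of_pairing hskew (hz i) (hzs i) hBef
      (hm2span _ _ (hzdeg i) (hzsdeg i)) (by simp [hdual])
  have hterm : ∀ i, br (z i) (br e (zstar i)) =
      br (br (z i) e) (zstar i) + -((-1 : ℂ) ^ (p i).val) • h := fun i => by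
    rw [br_br_of_mem_zero hJac (hz i) hep, hdiag, map_smul, hef]
  have hpair : ∀ i, br (br (z (τ i)) e) (zstar (τ i)) = -br (z i) (br e (zstar i)) := fun i => by
    rw [← hτ1, hτ2]
    exact br_br_neg_sign_smul hbrp hskew hep (hz i) (hzs i)
  have hreflect : ∑ i, br (br (z i) e) (zstar i) = -∑ i, br (z i) (br e (zstar i)) := by
    rw [← Equiv.sum_comp (Function.Involutive.toPerm τ hτinv), ← Finset.sum_neg_distrib]
    exact Finset.sum_congr rfl fun i _ => hpair i
  apply eq_div_two_smul_of_eq_neg_add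
  rw [← sum_neg_neg_one_pow_zmod_two, Finset.sum_smul, ← hreflect, ← Finset.sum_add_distrib]
  exact Finset.sum_congr rfl fun i _ => hterm i

theorem stmt9
    {L : Type*} [AddCommGroup L] [Module ℂ L]
    (br : L →ₗ[ℂ] L →ₗ[ℂ] L)
    (Lp : ZMod 2 → Submodule ℂ L)
    (hcompl : IsCompl (Lp 0) (Lp 1))
    (hbrp : ∀ (i j : ZMod 2), ∀ x ∈ Lp i, ∀ y ∈ Lp j, br x y ∈ Lp (i + j))
    (hskew : ∀ (i j : ZMod 2), ∀ x ∈ Lp i, ∀ y ∈ Lp j,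
      br x y = -(((-1 : ℂ) ^ (i * j).val) • br y x))
    (hJac : ∀ (i j : ZMod 2), ∀ x ∈ Lp i, ∀ y ∈ Lp j, ∀ w : L,
      br (br x y) w = br x (br y w) - ((-1 : ℂ) ^ (i * j).val) • br y (br x w))
    (B : L →ₗ[ℂ] L →ₗ[ℂ] ℂ)
    (hBeven : ∀ x ∈ Lp 0, ∀ y ∈ Lp 1, B x y = 0 ∧ B y x = 0)
    (hBsuper : ∀ (i j : ZMod 2), ∀ x ∈ Lp i, ∀ y ∈ Lp j,
      B x y = ((-1 : ℂ) ^ (i * j).val) * B y x)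
    (hBinv : ∀ a b c : L, B (br a b) c = B a (br b c))
    (e h f : L) (hep : e ∈ Lp 0) (hhp : h ∈ Lp 0) (hfp : f ∈ Lp 0)
    (hef : br e f = h) (hhe : br h e = (2 : ℂ) • e) (hhf : br h f = (-2 : ℂ) • f)
    (hBef : B e f = 1)
    {ι : Type*} [Fintype ι] [DecidableEq ι]
    (p : ι → ZMod 2) (z zstar : ι → L)
    (hz : ∀ i, z i ∈ Lp (p i)) (hzs : ∀ i, zstar i ∈ Lp (p i))
    (hzdeg : ∀ i, br h (z i) = (-1 : ℂ) • z i)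
    (hzsdeg : ∀ i, br h (zstar i) = (-1 : ℂ) • zstar i)
    (hdual : ∀ i j, B e (br (zstar i) (z j)) = if i = j then (1 : ℂ) else 0)
    (hm2span : ∀ x y : L, br h x = (-1 : ℂ) • x → br h y = (-1 : ℂ) • y →
      br x y ∈ Submodule.span ℂ ({f} : Set L))
    (τ : ι → ι) (hτinv : ∀ i, τ (τ i) = i) (hτp : ∀ i, p (τ i) = p i)
    (hτ1 : ∀ i, zstar i = z (τ i))
    (hτ2 : ∀ i, zstar (τ i) = -(((-1 : ℂ) ^ (p i).val) • z i))
    (hexp : ∀ u : L, br h u = (-1 : ℂ) • u → u = ∑ i, B e (br (zstar i) u) • z i)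
    :
    ∑ i, br (z i) (br e (zstar i)) =
      ((((Finset.univ.filter fun i => p i = 1).card : ℂ) -
        ((Finset.univ.filter fun i => p i = 0).card : ℂ)) / 2) • h :=
  stmt9_general br Lp hbrp hskew hJac B e h f hep hef hBef p z zstar hz hzs hzdeg hzsdeg hdual
    hm2span τ hτinv hτ1 hτ2
end

section
/- Let g be a Lie superalgebra with sl2-triple (e,h,f), minimal grading, even supersymmetric invariant form (·,·) with (e,f)=1, and dual homogeneous bases {z_α}, {z_α*} of g(−1) relative to ⟨x,y⟩=(e,[x,y]). Then for every homogeneous x ∈ g(1) with [e,x]=0: Σ_{α∈S(−1)} (h, [x, z_α*])·z_α = (−1)^{|x|}·[x,f]. -/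
/-!
Expand `[x,f]`, which lies in `g(-1)`, in the basis `z_α`. Invariance of the form and `[e,f] = h`
give `(h,[x,z*]) = (e,[f,[x,z*]])`, and the Jacobi identity splits `[[x,z*],f]` into
`[x,[z*,f]]`, whose pairing with `e` is `([e,x],[z*,f]) = 0`, and a signed copy of `[z*,[x,f]]`.
The sign `(-1)^{|x||z*|}` may be replaced by `(-1)^{|x|}`: when `|z*| ≠ |x|` the element
`[z*,[x,f]]` is odd, so its pairing with the even element `e` vanishes.
-/

namespace LieSuperalgebra

variable {R L : Type*} [CommRing R] [AddCommGroup L] [Module R L]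
  {br : L →ₗ[R] L →ₗ[R] L} {Lp : ZMod 2 → Submodule R L}

theorem bracket_even_left_eq_neg_swap
    (hskew : ∀ (i j : ZMod 2), ∀ x ∈ Lp i, ∀ y ∈ Lp j,
      br x y = -(((-1 : R) ^ (i * j).val) • br y x))
    {i : ZMod 2} {a y : L} (ha : a ∈ Lp 0) (hy : y ∈ Lp i) : br a y = -br y a := by
  simpa using hskew 0 i a ha y hy

theorem bracket_eigenvector_add
    (hJac : ∀ (i j : ZMod 2), ∀ x ∈ Lp i, ∀ y ∈ Lp j, ∀ w : L,
      br (br x y) w = br x (br y w) - ((-1 : R) ^ (i * j).val) • br y (br x w))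
    {k : ZMod 2} {h x y : L} {a b : R} (hh : h ∈ Lp 0) (hx : x ∈ Lp k)
    (hhx : br h x = a • x) (hhy : br h y = b • y) :
    br h (br x y) = (a + b) • br x y := by
  have hJ := hJac 0 k h hh x hx y
  simp only [zero_mul, ZMod.val_zero, pow_zero, one_smul, hhx, hhy, map_smul,
    LinearMap.smul_apply] at hJ
  rw [add_smul, hJ]
  abel

theorem form_bracket_eq_sign_mul_form
    (hbrp : ∀ (i j : ZMod 2), ∀ x ∈ Lp i, ∀ y ∈ Lp j, br x y ∈ Lp (i + j))
    (hskew : ∀ (i j : ZMod 2), ∀ x ∈ Lp i, ∀ y ∈ Lp j,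
      br x y = -(((-1 : R) ^ (i * j).val) • br y x))
    (hJac : ∀ (i j : ZMod 2), ∀ x ∈ Lp i, ∀ y ∈ Lp j, ∀ w : L,
      br (br x y) w = br x (br y w) - ((-1 : R) ^ (i * j).val) • br y (br x w))
    {B : L →ₗ[R] L →ₗ[R] R} (hBinv : ∀ a b c : L, B (br a b) c = B a (br b c))
    {e h f x z : L} {i k : ZMod 2} (hf : f ∈ Lp 0) (hx : x ∈ Lp k) (hz : z ∈ Lp i)
    (hef : br e f = h) (hex : br e x = 0) :
    B h (br x z) = (-1 : R) ^ (k * i).val * B e (br z (br x f)) := by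
  have hxz : br x z ∈ Lp (k + i) := hbrp k i x hx z hz
  calc B h (br x z) = B e (br f (br x z)) := by rw [← hef, hBinv]
    _ = -B e (br x (br z f)) + (-1 : R) ^ (k * i).val * B e (br z (br x f)) := by
      rw [bracket_even_left_eq_neg_swap hskew hf hxz, hJac k i x hx z hz f]
      simp only [map_neg, map_sub, map_smul, smul_eq_mul]
      ring
    _ = (-1 : R) ^ (k * i).val * B e (br z (br x f)) := by
      rw [← hBinv, hex, map_zero, LinearMap.zero_apply, neg_zero, zero_add]

theorem sign_mul_eq_of_forall_odd_eq_zero {φ : L →ₗ[R] R} (hφ : ∀ w ∈ Lp 1, φ w = 0)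
    {i k : ZMod 2} {w : L} (hw : w ∈ Lp (i + k)) :
    (-1 : R) ^ (k * i).val * φ w = (-1 : R) ^ k.val * φ w := by
  by_cases hik : i = k
  · subst hik
    rw [show ∀ i : ZMod 2, (i * i).val = i.val by decide]
  · rw [(show ∀ i k : ZMod 2, i ≠ k → i + k = 1 by decide) i k hik] at hw
    rw [hφ w hw, mul_zero, mul_zero]

end LieSuperalgebra

open LieSuperalgebra in
theorem stmt11_general
    {L : Type*} [AddCommGroup L] [Module ℂ L]
    (br : L →ₗ[ℂ] L →ₗ[ℂ] L)
    (Lp : ZMod 2 → Submodule ℂ L)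
    (hbrp : ∀ (i j : ZMod 2), ∀ x ∈ Lp i, ∀ y ∈ Lp j, br x y ∈ Lp (i + j))
    (hskew : ∀ (i j : ZMod 2), ∀ x ∈ Lp i, ∀ y ∈ Lp j,
      br x y = -(((-1 : ℂ) ^ (i * j).val) • br y x))
    (hJac : ∀ (i j : ZMod 2), ∀ x ∈ Lp i, ∀ y ∈ Lp j, ∀ w : L,
      br (br x y) w = br x (br y w) - ((-1 : ℂ) ^ (i * j).val) • br y (br x w))
    (B : L →ₗ[ℂ] L →ₗ[ℂ] ℂ)
    (hBeven : ∀ x ∈ Lp 0, ∀ y ∈ Lp 1, B x y = 0 ∧ B y x = 0)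
    (hBinv : ∀ a b c : L, B (br a b) c = B a (br b c))
    (e h f : L) (hep : e ∈ Lp 0) (hhp : h ∈ Lp 0) (hfp : f ∈ Lp 0)
    (hef : br e f = h) (hhf : br h f = (-2 : ℂ) • f)
    {ι : Type*} [Fintype ι]
    (p : ι → ZMod 2) (z zstar : ι → L)
    (hzs : ∀ i, zstar i ∈ Lp (p i))
    (hexp : ∀ u : L, br h u = (-1 : ℂ) • u → u = ∑ i, B e (br (zstar i) u) • z i)
    :
    ∀ (k : ZMod 2), ∀ x ∈ Lp k, br h x = x → br e x = 0 →
      ∑ j, B h (br x (zstar j)) • z j = ((-1 : ℂ) ^ k.val) • br x f := by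
  intro k x hx hhx hex
  have hxf : br x f ∈ Lp k := by simpa using hbrp k 0 x hx f hfp
  have hxf_eigen : br h (br x f) = (-1 : ℂ) • br x f := by
    rw [bracket_eigenvector_add hJac hhp hx (hhx.trans (one_smul ℂ x).symm) hhf]
    norm_num
  conv_rhs => rw [hexp _ hxf_eigen, Finset.smul_sum]
  refine Finset.sum_congr rfl fun j _ => ?_
  rw [smul_smul, form_bracket_eq_sign_mul_form hbrp hskew hJac hBinv hfp hx (hzs j) hef hex]
  exact congrArg (· • z j) (sign_mul_eq_of_forall_odd_eq_zero
    (fun w hw => (hBeven e hep w hw).1) (hbrp _ _ _ (hzs j) _ hxf))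

theorem stmt11
    {L : Type*} [AddCommGroup L] [Module ℂ L]
    (br : L →ₗ[ℂ] L →ₗ[ℂ] L)
    (Lp : ZMod 2 → Submodule ℂ L)
    (hcompl : IsCompl (Lp 0) (Lp 1))
    (hbrp : ∀ (i j : ZMod 2), ∀ x ∈ Lp i, ∀ y ∈ Lp j, br x y ∈ Lp (i + j))
    (hskew : ∀ (i j : ZMod 2), ∀ x ∈ Lp i, ∀ y ∈ Lp j,
      br x y = -(((-1 : ℂ) ^ (i * j).val) • br y x))
    (hJac : ∀ (i j : ZMod 2), ∀ x ∈ Lp i, ∀ y ∈ Lp j, ∀ w : L,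
      br (br x y) w = br x (br y w) - ((-1 : ℂ) ^ (i * j).val) • br y (br x w))
    (B : L →ₗ[ℂ] L →ₗ[ℂ] ℂ)
    (hBeven : ∀ x ∈ Lp 0, ∀ y ∈ Lp 1, B x y = 0 ∧ B y x = 0)
    (hBsuper : ∀ (i j : ZMod 2), ∀ x ∈ Lp i, ∀ y ∈ Lp j,
      B x y = ((-1 : ℂ) ^ (i * j).val) * B y x)
    (hBinv : ∀ a b c : L, B (br a b) c = B a (br b c))
    (e h f : L) (hep : e ∈ Lp 0) (hhp : h ∈ Lp 0) (hfp : f ∈ Lp 0)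
    (hef : br e f = h) (hhe : br h e = (2 : ℂ) • e) (hhf : br h f = (-2 : ℂ) • f)
    (hBef : B e f = 1)
    {ι : Type*} [Fintype ι] [DecidableEq ι]
    (p : ι → ZMod 2) (z zstar : ι → L)
    (hz : ∀ i, z i ∈ Lp (p i)) (hzs : ∀ i, zstar i ∈ Lp (p i))
    (hzdeg : ∀ i, br h (z i) = (-1 : ℂ) • z i)
    (hzsdeg : ∀ i, br h (zstar i) = (-1 : ℂ) • zstar i)
    (hdual : ∀ i j, B e (br (zstar i) (z j)) = if i = j then (1 : ℂ) else 0)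
    (hm2span : ∀ x y : L, br h x = (-1 : ℂ) • x → br h y = (-1 : ℂ) • y →
      br x y ∈ Submodule.span ℂ ({f} : Set L))
    (hexp : ∀ u : L, br h u = (-1 : ℂ) • u → u = ∑ i, B e (br (zstar i) u) • z i)
    :
    ∀ (k : ZMod 2), ∀ x ∈ Lp k, br h x = x → br e x = 0 →
      ∑ j, B h (br x (zstar j)) • z j = ((-1 : ℂ) ^ k.val) • br x f :=
  stmt11_general br Lp hbrp hskew hJac B hBeven hBinv e h f hep hhp hfp hef hhf p z zstar hzs hexp
end

section
/- Let A be an associative superalgebra over ℂ, B ⊆ A a unital subsuperalgebra, and v ∈ A an odd element such that v² = (1/2)·1, [v, b] = 0 (supercommutator) for all b ∈ B, and A = B ⊕ Bv as a vector space. If I ⊆ B is a two-sided ideal of B of codimension 1, then I ⊕ Iv is a two-sided ideal of A of codimension 2. In particular, A admits a 2-dimensional quotient. -/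
/-!
Splitting an element of `B` (or of the graded ideal `I`) into parity components `x₀ + x₁` gives
`v (x₀ + x₁) = (x₀ - x₁) v`, so `v B = B v` and `v I = I v`. As `v²` is a scalar, `I + I v` is
then stable under left and right multiplication by `B` and by `v`, hence is a two-sided ideal since
`A = B + B v`. The linear isomorphism `B × B ≃ A`, `(b, b') ↦ b + b' v`, carries `I × I` onto
`I + I v`, so `A ⧸ (I + I v) ≃ (B ⧸ I) × (B ⧸ I)` has dimension `1 + 1`.
-/

theorem mul_add_eq_sub_mul {R : Type*} [Ring R] {v x y : R}
    (hx : v * x - x * v = 0) (hy : v * y + y * v = 0) : v * (x + y) = (x - y) * v := by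
  rw [mul_add, sub_eq_zero.mp hx, eq_neg_of_add_eq_zero_left hy, sub_mul, sub_eq_add_neg]

namespace Submodule

variable {K A : Type*} [CommRing K] [Ring A] [Algebra K A]

theorem mem_sup_map_mulRight {I : Submodule K A} {v y : A} :
    y ∈ I ⊔ I.map (LinearMap.mulRight K v) ↔ ∃ i ∈ I, ∃ i' ∈ I, i + i' * v = y := by
  simp only [mem_sup, mem_map, LinearMap.mulRight_apply]
  constructor
  · rintro ⟨i, hi, _, ⟨i', hi', rfl⟩, rfl⟩
    exact ⟨i, hi, i', hi', rfl⟩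
  · rintro ⟨i, hi, i', hi', rfl⟩
    exact ⟨i, hi, _, ⟨i', hi', rfl⟩, rfl⟩

theorem add_mul_mem_sup_map_mulRight {I : Submodule K A} {v i i' : A} (hi : i ∈ I)
    (hi' : i' ∈ I) :
    i + i' * v ∈ I ⊔ I.map (LinearMap.mulRight K v) :=
  mem_sup_map_mulRight.mpr ⟨i, hi, i', hi', rfl⟩

section IsTwoSided

variable {B I : Submodule K A} {v : A} {a : K}

theorem mul_mem_sup_map_mulRight (hv2 : v * v = algebraMap K A a)
    (hvI : ∀ i ∈ I, ∃ j ∈ I, v * i = j * v) (hdec : ∀ x : A, ∃ b ∈ B, ∃ b' ∈ B, x = b + b' * v)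
    (hIdeal : ∀ i ∈ I, ∀ b ∈ B, b * i ∈ I) (x : A) {y : A}
    (hy : y ∈ I ⊔ I.map (LinearMap.mulRight K v)) :
    x * y ∈ I ⊔ I.map (LinearMap.mulRight K v) := by
  have hB : ∀ b ∈ B, ∀ y ∈ I ⊔ I.map (LinearMap.mulRight K v),
      b * y ∈ I ⊔ I.map (LinearMap.mulRight K v) := by
    rintro b hb _ hz
    obtain ⟨i, hi, i', hi', rfl⟩ := mem_sup_map_mulRight.mp hz
    rw [mul_add, ← mul_assoc]
    exact add_mul_mem_sup_map_mulRight (hIdeal i hi b hb) (hIdeal i' hi' b hb)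
  have hv : v * y ∈ I ⊔ I.map (LinearMap.mulRight K v) := by
    obtain ⟨i, hi, i', hi', rfl⟩ := mem_sup_map_mulRight.mp hy
    obtain ⟨j, hj, hvj⟩ := hvI i hi
    obtain ⟨j', hj', hvj'⟩ := hvI i' hi'
    have : v * (i + i' * v) = a • j' + j * v := by
      rw [mul_add, hvj, ← mul_assoc, hvj', mul_assoc, hv2, ← Algebra.commutes, ← Algebra.smul_def,
        add_comm]
    rw [this]
    exact add_mul_mem_sup_map_mulRight (I.smul_mem a hj') hj
  obtain ⟨b, hb, b', hb', rfl⟩ := hdec x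
  rw [add_mul, mul_assoc]
  exact add_mem (hB b hb y hy) (hB b' hb' _ hv)

theorem sup_map_mulRight_mul_mem (hv2 : v * v = algebraMap K A a)
    (hvB : ∀ b ∈ B, ∃ c ∈ B, v * b = c * v) (hdec : ∀ x : A, ∃ b ∈ B, ∃ b' ∈ B, x = b + b' * v)
    (hIdeal : ∀ i ∈ I, ∀ b ∈ B, i * b ∈ I) (x : A) {y : A}
    (hy : y ∈ I ⊔ I.map (LinearMap.mulRight K v)) :
    y * x ∈ I ⊔ I.map (LinearMap.mulRight K v) := by
  have hB : ∀ b ∈ B, ∀ y ∈ I ⊔ I.map (LinearMap.mulRight K v),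
      y * b ∈ I ⊔ I.map (LinearMap.mulRight K v) := by
    rintro b hb _ hz
    obtain ⟨i, hi, i', hi', rfl⟩ := mem_sup_map_mulRight.mp hz
    obtain ⟨c, hc, hvc⟩ := hvB b hb
    rw [add_mul, mul_assoc, hvc, ← mul_assoc]
    exact add_mul_mem_sup_map_mulRight (hIdeal i hi b hb) (hIdeal i' hi' c hc)
  have hv : ∀ y ∈ I ⊔ I.map (LinearMap.mulRight K v),
      y * v ∈ I ⊔ I.map (LinearMap.mulRight K v) := by
    rintro _ hz
    obtain ⟨i, hi, i', hi', rfl⟩ := mem_sup_map_mulRight.mp hz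
    have : (i + i' * v) * v = a • i' + i * v := by
      rw [add_mul, mul_assoc, hv2, ← Algebra.commutes, ← Algebra.smul_def, add_comm]
    rw [this]
    exact add_mul_mem_sup_map_mulRight (I.smul_mem a hi') hi
  obtain ⟨b, hb, b', hb', rfl⟩ := hdec x
  rw [mul_add, ← mul_assoc]
  exact add_mem (hB b hb y hy) (hv _ (hB b' hb' y hy))

end IsTwoSided

section Quotient

variable (B : Submodule K A) (v : A)

def addMulRight : B × B →ₗ[K] A :=
  B.subtype.coprod (LinearMap.mulRight K v ∘ₗ B.subtype)

theorem map_addMulRight_prod {I : Submodule K A} (hIB : I ≤ B) :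
    ((I.comap B.subtype).prod (I.comap B.subtype)).map (addMulRight B v) =
      I ⊔ I.map (LinearMap.mulRight K v) := by
  rw [addMulRight, LinearMap.map_coprod_prod, map_comp, map_comap_subtype, inf_eq_right.mpr hIB]

variable {B v}

theorem addMulRight_bijective (hdec : ∀ x : A, ∃ b ∈ B, ∃ b' ∈ B, x = b + b' * v)
    (hindep : ∀ b ∈ B, ∀ b' ∈ B, b + b' * v = 0 → b = 0 ∧ b' = 0) :
    Function.Bijective (addMulRight B v) := by
  refine ⟨(injective_iff_map_eq_zero _).mpr ?_, fun x => ?_⟩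
  · rintro ⟨⟨b, hb⟩, ⟨b', hb'⟩⟩ h
    obtain ⟨rfl, rfl⟩ := hindep b hb b' hb' h
    rfl
  · obtain ⟨b, hb, b', hb', rfl⟩ := hdec x
    exact ⟨(⟨b, hb⟩, ⟨b', hb'⟩), rfl⟩

noncomputable def quotientSupMapMulRightEquiv {I : Submodule K A} (hIB : I ≤ B)
    (hdec : ∀ x : A, ∃ b ∈ B, ∃ b' ∈ B, x = b + b' * v)
    (hindep : ∀ b ∈ B, ∀ b' ∈ B, b + b' * v = 0 → b = 0 ∧ b' = 0) :
    (A ⧸ (I ⊔ I.map (LinearMap.mulRight K v))) ≃ₗ[K]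
      (B ⧸ I.comap B.subtype) × (B ⧸ I.comap B.subtype) :=
  let e := LinearEquiv.ofBijective _ (addMulRight_bijective hdec hindep)
  let W := I.comap B.subtype
  let f := (W.mkQ.prodMap W.mkQ) ∘ₗ e.symm.toLinearMap
  have hf : Function.Surjective f :=
    (Function.Surjective.prodMap W.mkQ_surjective W.mkQ_surjective).comp e.symm.surjective
  have hker : LinearMap.ker f = I ⊔ I.map (LinearMap.mulRight K v) := by
    rw [LinearMap.ker_comp, LinearMap.ker_prodMap, ker_mkQ, comap_equiv_eq_map_symm,
      LinearEquiv.symm_symm, ← map_addMulRight_prod B v hIB]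
    rfl
  (quotEquivOfEq _ _ hker.symm).trans (f.quotKerEquivOfSurjective hf)

end Quotient

end Submodule

open Submodule in
theorem stmt16_general {A : Type*} [Ring A] [Algebra ℂ A]
    (A0 A1 : Submodule ℂ A)
    (B : Subalgebra ℂ A)
    (hBsub : ∀ x ∈ B, ∃ x0 x1 : A, x0 ∈ B ∧ x0 ∈ A0 ∧ x1 ∈ B ∧ x1 ∈ A1 ∧ x = x0 + x1)
    (v : A)
    (hv2 : v * v = algebraMap ℂ A (1 / 2))
    (hcomm0 : ∀ x ∈ B, x ∈ A0 → v * x - x * v = 0)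
    (hcomm1 : ∀ x ∈ B, x ∈ A1 → v * x + x * v = 0)
    (hdec : ∀ x : A, ∃ b ∈ B, ∃ b' ∈ B, x = b + b' * v)
    (hindep : ∀ b ∈ B, ∀ b' ∈ B, b + b' * v = 0 → b = 0 ∧ b' = 0)
    (I : Submodule ℂ A)
    (hIB : I ≤ Subalgebra.toSubmodule B)
    (hIgraded : ∀ x ∈ I, ∃ x0 ∈ I, ∃ x1 ∈ I, x0 ∈ A0 ∧ x1 ∈ A1 ∧ x = x0 + x1)
    (hIdeal : ∀ x ∈ I, ∀ b ∈ B, b * x ∈ I ∧ x * b ∈ I)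
    (hcodim : Module.finrank ℂ
      (↥(Subalgebra.toSubmodule B) ⧸ I.comap (Subalgebra.toSubmodule B).subtype) = 1) :
    (∀ x : A, ∀ y ∈ I ⊔ Submodule.map (LinearMap.mulRight ℂ v) I,
      x * y ∈ I ⊔ Submodule.map (LinearMap.mulRight ℂ v) I ∧
      y * x ∈ I ⊔ Submodule.map (LinearMap.mulRight ℂ v) I) ∧
    Module.finrank ℂ (A ⧸ (I ⊔ Submodule.map (LinearMap.mulRight ℂ v) I)) = 2 := by
  have hvB : ∀ b ∈ B, ∃ c ∈ B, v * b = c * v := by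
    intro b hb
    obtain ⟨b0, b1, hb0B, hb0, hb1B, hb1, rfl⟩ := hBsub b hb
    exact ⟨b0 - b1, B.sub_mem hb0B hb1B,
      mul_add_eq_sub_mul (hcomm0 b0 hb0B hb0) (hcomm1 b1 hb1B hb1)⟩
  have hvI : ∀ i ∈ I, ∃ j ∈ I, v * i = j * v := by
    intro i hi
    obtain ⟨i0, hi0, i1, hi1, hi0', hi1', rfl⟩ := hIgraded i hi
    exact ⟨i0 - i1, I.sub_mem hi0 hi1,
      mul_add_eq_sub_mul (hcomm0 i0 (hIB hi0) hi0') (hcomm1 i1 (hIB hi1) hi1')⟩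
  refine ⟨fun x y hy => ⟨?_, ?_⟩, ?_⟩
  · exact mul_mem_sup_map_mulRight (B := Subalgebra.toSubmodule B) hv2 hvI hdec
      (fun i hi b hb => (hIdeal i hi b hb).1) x hy
  · exact sup_map_mulRight_mul_mem (B := Subalgebra.toSubmodule B) hv2 hvB hdec
      (fun i hi b hb => (hIdeal i hi b hb).2) x hy
  have := Module.finite_of_finrank_eq_succ hcodim
  rw [(quotientSupMapMulRightEquiv hIB hdec hindep).finrank_eq, Module.finrank_prod, hcodim]

theorem stmt16 {A : Type*} [Ring A] [Algebra ℂ A]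
    (A0 A1 : Submodule ℂ A)
    (hone : (1 : A) ∈ A0)
    (hAmul00 : ∀ x ∈ A0, ∀ y ∈ A0, x * y ∈ A0)
    (hAmul01 : ∀ x ∈ A0, ∀ y ∈ A1, x * y ∈ A1)
    (hAmul10 : ∀ x ∈ A1, ∀ y ∈ A0, x * y ∈ A1)
    (hAmul11 : ∀ x ∈ A1, ∀ y ∈ A1, x * y ∈ A0)
    (B : Subalgebra ℂ A)
    (hBsub : ∀ x ∈ B, ∃ x0 x1 : A, x0 ∈ B ∧ x0 ∈ A0 ∧ x1 ∈ B ∧ x1 ∈ A1 ∧ x = x0 + x1)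
    (v : A) (hv : v ∈ A1)
    (hv2 : v * v = algebraMap ℂ A (1 / 2))
    (hcomm0 : ∀ x ∈ B, x ∈ A0 → v * x - x * v = 0)
    (hcomm1 : ∀ x ∈ B, x ∈ A1 → v * x + x * v = 0)
    (hdec : ∀ x : A, ∃ b ∈ B, ∃ b' ∈ B, x = b + b' * v)
    (hindep : ∀ b ∈ B, ∀ b' ∈ B, b + b' * v = 0 → b = 0 ∧ b' = 0)
    (I : Submodule ℂ A)
    (hIB : I ≤ Subalgebra.toSubmodule B)
    (hIgraded : ∀ x ∈ I, ∃ x0 ∈ I, ∃ x1 ∈ I, x0 ∈ A0 ∧ x1 ∈ A1 ∧ x = x0 + x1)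
    (hIdeal : ∀ x ∈ I, ∀ b ∈ B, b * x ∈ I ∧ x * b ∈ I)
    (hcodim : Module.finrank ℂ
      (↥(Subalgebra.toSubmodule B) ⧸ I.comap (Subalgebra.toSubmodule B).subtype) = 1) :
    (∀ x : A, ∀ y ∈ I ⊔ Submodule.map (LinearMap.mulRight ℂ v) I,
      x * y ∈ I ⊔ Submodule.map (LinearMap.mulRight ℂ v) I ∧
      y * x ∈ I ⊔ Submodule.map (LinearMap.mulRight ℂ v) I) ∧
    Module.finrank ℂ (A ⧸ (I ⊔ Submodule.map (LinearMap.mulRight ℂ v) I)) = 2 :=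
  stmt16_general A0 A1 B hBsub v hv2 hcomm0 hcomm1 hdec hindep I hIB hIgraded hIdeal hcodim
end

section
/- Let g be a Lie superalgebra with even supersymmetric invariant form (·,·), sl2-triple (e,h,f) with (e,f)=1 and minimal grading, and dual homogeneous bases {z_α}, {z_α*} of g(−1) with respect to ⟨x,y⟩=(e,[x,y]). Then for every homogeneous x ∈ g(1) with [e,x]=0: Σ_{α∈S(−1)} (h, [x, z_α])·z_α* = −[x,f]. -/
/-!
Reindexing by the involution `τ` turns the left-hand side into `∑ (h, [x, z*_j]) z_j`. Since
`h = [e, f]`, invariance, the Jacobi identity and `[e, x] = 0` give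
`(h, [x, z*_j]) = (e, [z*_j, [f, x]])` for odd `z*_j`, while even `z_j` vanish because the two
duality relations give `z_j = z*_{τ j} = -z_j`. As `[f, x]` has `ad h`-eigenvalue `-2 + 1 = -1`, the
dual-basis expansion of `[f, x]` is exactly the resulting sum, and `[f, x] = -[x, f]`.
-/

structure IsLieSuperBracket {R L : Type*} [CommRing R] [AddCommGroup L] [Module R L]
    (br : L →ₗ[R] L →ₗ[R] L) (Lp : ZMod 2 → Submodule R L) : Prop where
  bracket_mem : ∀ (i j : ZMod 2), ∀ x ∈ Lp i, ∀ y ∈ Lp j, br x y ∈ Lp (i + j)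
  skew : ∀ (i j : ZMod 2), ∀ x ∈ Lp i, ∀ y ∈ Lp j,
    br x y = -(((-1 : R) ^ (i * j).val) • br y x)
  jacobi : ∀ (i j : ZMod 2), ∀ x ∈ Lp i, ∀ y ∈ Lp j, ∀ w : L,
    br (br x y) w = br x (br y w) - ((-1 : R) ^ (i * j).val) • br y (br x w)

structure IsEvenInvariantForm {R L : Type*} [CommRing R] [AddCommGroup L] [Module R L]
    (br : L →ₗ[R] L →ₗ[R] L) (Lp : ZMod 2 → Submodule R L) (B : L →ₗ[R] L →ₗ[R] R) : Prop where
  even : ∀ x ∈ Lp 0, ∀ y ∈ Lp 1, B x y = 0 ∧ B y x = 0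
  invariant : ∀ a b c : L, B (br a b) c = B a (br b c)

theorem Function.Involutive.sum_comp_swap {ι M : Type*} [Fintype ι] [AddCommMonoid M]
    {τ : ι → ι} (hτ : Function.Involutive τ) (F : ι → ι → M) :
    ∑ j, F j (τ j) = ∑ j, F (τ j) j := by
  simpa only [Function.Involutive.coe_toPerm, hτ _] using
    Equiv.sum_comp (hτ.toPerm τ) fun j => F (τ j) j

namespace IsLieSuperBracket

variable {R L : Type*} [CommRing R] [AddCommGroup L] [Module R L]
  {br : L →ₗ[R] L →ₗ[R] L} {Lp : ZMod 2 → Submodule R L}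

theorem bracket_eq_neg_of_even_right (hL : IsLieSuperBracket br Lp) {i : ZMod 2} {x y : L}
    (hx : x ∈ Lp i) (hy : y ∈ Lp 0) : br x y = -br y x := by
  simpa using hL.skew i 0 x hx y hy

theorem bracket_comm_of_odd (hL : IsLieSuperBracket br Lp) {x y : L}
    (hx : x ∈ Lp 1) (hy : y ∈ Lp 1) : br x y = br y x := by
  have hxy := hL.skew 1 1 x hx y hy
  rw [show ((1 : ZMod 2) * 1).val = 1 from rfl] at hxy
  simpa using hxy

theorem bracket_bracket_of_even (hL : IsLieSuperBracket br Lp) {j : ZMod 2} {a y : L}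
    (ha : a ∈ Lp 0) (hy : y ∈ Lp j) (w : L) :
    br a (br y w) = br (br a y) w + br y (br a w) := by
  rw [hL.jacobi 0 j a ha y hy w]
  simp

theorem bracket_eigen_of_even (hL : IsLieSuperBracket br Lp) {j : ZMod 2} {h a b : L}
    {c d : R} (hh : h ∈ Lp 0) (ha : a ∈ Lp j) (hha : br h a = c • a) (hhb : br h b = d • b) :
    br h (br a b) = (c + d) • br a b := by
  rw [hL.bracket_bracket_of_even hh ha, hha, hhb, map_smul, LinearMap.smul_apply, map_smul,
    add_smul]

theorem form_bracket_bracket_eq {B : L →ₗ[R] L →ₗ[R] R} (hL : IsLieSuperBracket br Lp)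
    (hB : IsEvenInvariantForm br Lp B) {k : ZMod 2} {e f x w : L} (he : e ∈ Lp 0)
    (hf : f ∈ Lp 0) (hx : x ∈ Lp k) (hex : br e x = 0) (hw : w ∈ Lp 1) :
    B (br e f) (br x w) = B e (br w (br f x)) := by
  have hfx : br f x ∈ Lp k := by simpa using hL.bracket_mem 0 k f hf x hx
  obtain rfl | rfl := (by decide : ∀ a : ZMod 2, a = 0 ∨ a = 1) k
  · have hef : br e f ∈ Lp 0 := hL.bracket_mem 0 0 e he f hf
    have hxw : br x w ∈ Lp 1 := by simpa using hL.bracket_mem 0 1 x hx w hw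
    have hwfx : br w (br f x) ∈ Lp 1 := by simpa using hL.bracket_mem 1 0 w hw _ hfx
    rw [(hB.even _ hef _ hxw).1, (hB.even _ he _ hwfx).1]
  · have hxfw : B e (br x (br f w)) = 0 := by
      rw [← hB.invariant, hex, map_zero, LinearMap.zero_apply]
    rw [hB.invariant, hL.bracket_bracket_of_even hf hx, map_add, hxfw, add_zero,
      hL.bracket_comm_of_odd hfx hw]

end IsLieSuperBracket

theorem stmt17_general
    {L : Type*} [AddCommGroup L] [Module ℂ L]
    (br : L →ₗ[ℂ] L →ₗ[ℂ] L)
    (Lp : ZMod 2 → Submodule ℂ L)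
    (hbrp : ∀ (i j : ZMod 2), ∀ x ∈ Lp i, ∀ y ∈ Lp j, br x y ∈ Lp (i + j))
    (hskew : ∀ (i j : ZMod 2), ∀ x ∈ Lp i, ∀ y ∈ Lp j,
      br x y = -(((-1 : ℂ) ^ (i * j).val) • br y x))
    (hJac : ∀ (i j : ZMod 2), ∀ x ∈ Lp i, ∀ y ∈ Lp j, ∀ w : L,
      br (br x y) w = br x (br y w) - ((-1 : ℂ) ^ (i * j).val) • br y (br x w))
    (B : L →ₗ[ℂ] L →ₗ[ℂ] ℂ)
    (hBeven : ∀ x ∈ Lp 0, ∀ y ∈ Lp 1, B x y = 0 ∧ B y x = 0)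
    (hBinv : ∀ a b c : L, B (br a b) c = B a (br b c))
    (e h f : L) (hep : e ∈ Lp 0) (hhp : h ∈ Lp 0) (hfp : f ∈ Lp 0)
    (hef : br e f = h) (hhf : br h f = (-2 : ℂ) • f)
    {ι : Type*} [Fintype ι]
    (p : ι → ZMod 2) (z zstar : ι → L)
    (hzs : ∀ i, zstar i ∈ Lp (p i))
    (τ : ι → ι) (hτinv : ∀ i, τ (τ i) = i)
    (hτ1 : ∀ i, zstar i = z (τ i))
    (hτ2 : ∀ i, zstar (τ i) = -(((-1 : ℂ) ^ (p i).val) • z i))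
    (hexp : ∀ u : L, br h u = (-1 : ℂ) • u → u = ∑ i, B e (br (zstar i) u) • z i)
    :
    ∀ (k : ZMod 2), ∀ x ∈ Lp k, br h x = x → br e x = 0 →
      ∑ j, B h (br x (z j)) • zstar j = -(br x f) := by
  intro k x hx hhx hex
  have hL : IsLieSuperBracket br Lp := ⟨hbrp, hskew, hJac⟩
  have hB : IsEvenInvariantForm br Lp B := ⟨hBeven, hBinv⟩
  have hfx : br h (br f x) = (-1 : ℂ) • br f x := by
    rw [hL.bracket_eigen_of_even hhp hfp hhf (by rwa [one_smul] : br h x = (1 : ℂ) • x)]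
    norm_num
  have hz_even : ∀ i, p i = 0 → z i = 0 := fun i hi => by
    have hneg := hτ2 i
    rw [hτ1, hτinv, hi, ZMod.val_zero, pow_zero, one_smul] at hneg
    have := IsAddTorsionFree.of_isTorsionFree ℂ L
    exact self_eq_neg.mp hneg
  have hcoeff : ∀ j, B h (br x (zstar j)) • z j = B e (br (zstar j) (br f x)) • z j := by
    intro j
    obtain hj | hj := (by decide : ∀ a : ZMod 2, a = 0 ∨ a = 1) (p j)
    · rw [hz_even j hj, smul_zero, smul_zero]
    · rw [← hef, hL.form_bracket_bracket_eq hB hep hfp hx hex (hj ▸ hzs j)]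
  calc ∑ j, B h (br x (z j)) • zstar j
      = ∑ j, B h (br x (zstar j)) • z j := by
        simp only [hτ1]
        exact Function.Involutive.sum_comp_swap hτinv fun a b => B h (br x (z a)) • z b
    _ = ∑ j, B e (br (zstar j) (br f x)) • z j := Finset.sum_congr rfl fun j _ => hcoeff j
    _ = br f x := (hexp _ hfx).symm
    _ = -(br x f) := by rw [hL.bracket_eq_neg_of_even_right hx hfp, neg_neg]

theorem stmt17
    {L : Type*} [AddCommGroup L] [Module ℂ L]
    (br : L →ₗ[ℂ] L →ₗ[ℂ] L)
    (Lp : ZMod 2 → Submodule ℂ L)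
    (hcompl : IsCompl (Lp 0) (Lp 1))
    (hbrp : ∀ (i j : ZMod 2), ∀ x ∈ Lp i, ∀ y ∈ Lp j, br x y ∈ Lp (i + j))
    (hskew : ∀ (i j : ZMod 2), ∀ x ∈ Lp i, ∀ y ∈ Lp j,
      br x y = -(((-1 : ℂ) ^ (i * j).val) • br y x))
    (hJac : ∀ (i j : ZMod 2), ∀ x ∈ Lp i, ∀ y ∈ Lp j, ∀ w : L,
      br (br x y) w = br x (br y w) - ((-1 : ℂ) ^ (i * j).val) • br y (br x w))
    (B : L →ₗ[ℂ] L →ₗ[ℂ] ℂ)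
    (hBeven : ∀ x ∈ Lp 0, ∀ y ∈ Lp 1, B x y = 0 ∧ B y x = 0)
    (hBsuper : ∀ (i j : ZMod 2), ∀ x ∈ Lp i, ∀ y ∈ Lp j,
      B x y = ((-1 : ℂ) ^ (i * j).val) * B y x)
    (hBinv : ∀ a b c : L, B (br a b) c = B a (br b c))
    (e h f : L) (hep : e ∈ Lp 0) (hhp : h ∈ Lp 0) (hfp : f ∈ Lp 0)
    (hef : br e f = h) (hhe : br h e = (2 : ℂ) • e) (hhf : br h f = (-2 : ℂ) • f)
    (hBef : B e f = 1)
    {ι : Type*} [Fintype ι] [DecidableEq ι]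
    (p : ι → ZMod 2) (z zstar : ι → L)
    (hz : ∀ i, z i ∈ Lp (p i)) (hzs : ∀ i, zstar i ∈ Lp (p i))
    (hzdeg : ∀ i, br h (z i) = (-1 : ℂ) • z i)
    (hzsdeg : ∀ i, br h (zstar i) = (-1 : ℂ) • zstar i)
    (hdual : ∀ i j, B e (br (zstar i) (z j)) = if i = j then (1 : ℂ) else 0)
    (hm2span : ∀ x y : L, br h x = (-1 : ℂ) • x → br h y = (-1 : ℂ) • y →
      br x y ∈ Submodule.span ℂ ({f} : Set L))
    (τ : ι → ι) (hτinv : ∀ i, τ (τ i) = i) (hτp : ∀ i, p (τ i) = p i)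
    (hτ1 : ∀ i, zstar i = z (τ i))
    (hτ2 : ∀ i, zstar (τ i) = -(((-1 : ℂ) ^ (p i).val) • z i))
    (hexp : ∀ u : L, br h u = (-1 : ℂ) • u → u = ∑ i, B e (br (zstar i) u) • z i)
    :
    ∀ (k : ZMod 2), ∀ x ∈ Lp k, br h x = x → br e x = 0 →
      ∑ j, B h (br x (z j)) • zstar j = -(br x f) :=
  stmt17_general br Lp hbrp hskew hJac B hBeven hBinv e h f hep hhp hfp hef hhf p z zstar hzs τ
    hτinv hτ1 hτ2 hexp
end
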